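/- Let b, c ∈ ℝ and define on ℝ⁴ ≅ ℂ²: d_M(x₁,x₂,y₁,y₂) = [(x₁ − c y₁ + b y₂)² + (x₂ − c y₂ − b y₁)²]/(1+b²+c²) and d_N = y₁² + y₂². Then |Re(∑_{j=1,2} (∂d_M/∂z_j)(∂d_N/∂z̄_j))| ≤ ((|b| + |c|)/√(1+b²+c²))·(d_M d_N)^{1/2}. -/

import Mathlib

open Complex

/-- Partial derivative in the direction `x_j`, identifying `ℂⁿ ≅ ℝⁿ × ℝⁿ`
via `z_j = x_j + i y_j`. -/
noncomputable def pderivX {n : ℕ} (j : Fin n)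
    (f : (Fin n → ℝ) × (Fin n → ℝ) → ℝ) : (Fin n → ℝ) × (Fin n → ℝ) → ℝ :=
  fun p => deriv (fun t => f (Function.update p.1 j t, p.2)) (p.1 j)

/-- Partial derivative in the direction `y_j`. -/
noncomputable def pderivY {n : ℕ} (j : Fin n)
    (f : (Fin n → ℝ) × (Fin n → ℝ) → ℝ) : (Fin n → ℝ) × (Fin n → ℝ) → ℝ :=
  fun p => deriv (fun t => f (p.1, Function.update p.2 j t)) (p.2 j)

/-- The holomorphic derivative `∂f/∂z_j = (1/2)(∂f/∂x_j − i ∂f/∂y_j)`. -/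
noncomputable def dz {n : ℕ} (j : Fin n)
    (f : (Fin n → ℝ) × (Fin n → ℝ) → ℝ) (p : (Fin n → ℝ) × (Fin n → ℝ)) : ℂ :=
  (1/2 : ℂ) * ((pderivX j f p : ℂ) - Complex.I * (pderivY j f p : ℂ))

/-- The antiholomorphic derivative `∂f/∂z̄_j = (1/2)(∂f/∂x_j + i ∂f/∂y_j)`. -/
noncomputable def dzbar {n : ℕ} (j : Fin n)
    (f : (Fin n → ℝ) × (Fin n → ℝ) → ℝ) (p : (Fin n → ℝ) × (Fin n → ℝ)) : ℂ :=
  (1/2 : ℂ) * ((pderivX j f p : ℂ) + Complex.I * (pderivY j f p : ℂ))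

/-! In real coordinates `Re (∂f/∂z_j · ∂g/∂z̄_j) = (f_{x_j} g_{x_j} + f_{y_j} g_{y_j}) / 4`. Write
`u = x - A y`, so that `d_M = |u|² / (1 + b² + c²)`; as `d_N = |y|²` does not depend on `x`, the sum
becomes `(b (u₁ y₂ - u₂ y₁) - c (u₁ y₁ + u₂ y₂)) / (1 + b² + c²)`. Cauchy–Schwarz bounds each
bracket by `|u| |y| = (1 + b² + c²)^{1/2} (d_M d_N)^{1/2}`. -/

open Function

section PartialDerivatives

variable {n : ℕ}

theorem re_dz_mul_dzbar (j : Fin n) (f g : (Fin n → ℝ) × (Fin n → ℝ) → ℝ)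
    (p : (Fin n → ℝ) × (Fin n → ℝ)) :
    (dz j f p * dzbar j g p).re =
      (pderivX j f p * pderivX j g p + pderivY j f p * pderivY j g p) / 4 := by
  simp only [dz, one_div, dzbar, mul_re, inv_re, re_ofNat, normSq_ofNat, div_self_mul_self', sub_re,
    ofReal_re, I_re, zero_mul, I_im, ofReal_im, mul_zero, sub_self, sub_zero, inv_im, im_ofNat,
    neg_zero, zero_div, sub_im, mul_im, one_mul, zero_add, zero_sub, mul_neg, add_re, add_zero,
    add_im, neg_mul, sub_neg_eq_add]
  ring

theorem hasDerivAt_prodMk_update (p : (Fin n → ℝ) × (Fin n → ℝ)) (j : Fin n) (t : ℝ) :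
    HasDerivAt (fun s => (p.1, update p.2 j s)) (0, Pi.single j 1) t :=
  (hasDerivAt_const t p.1).prodMk (hasDerivAt_update p.2 j t)

end PartialDerivatives

theorem abs_mul_add_mul_le_sqrt_mul_sqrt (a₁ a₂ b₁ b₂ : ℝ) :
    |a₁ * b₁ + a₂ * b₂| ≤ √(a₁ ^ 2 + a₂ ^ 2) * √(b₁ ^ 2 + b₂ ^ 2) := by
  rw [← Real.sqrt_sq_eq_abs, ← Real.sqrt_mul (by positivity)]
  exact Real.sqrt_le_sqrt (by nlinarith [sq_nonneg (a₁ * b₂ - a₂ * b₁)])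

section SquaredDistances

variable (b c : ℝ)

noncomputable def resM₁ (p : (Fin 2 → ℝ) × (Fin 2 → ℝ)) : ℝ := p.1 0 - c * p.2 0 + b * p.2 1

noncomputable def resM₂ (p : (Fin 2 → ℝ) × (Fin 2 → ℝ)) : ℝ := p.1 1 - c * p.2 1 - b * p.2 0

/-- `d_M`, the squared distance to `M = (A + iI)ℝ²` with `A = [[c, -b], [b, c]]`;
`(resM₁, resM₂)` is `x - A y`. -/
noncomputable def sqDistM (p : (Fin 2 → ℝ) × (Fin 2 → ℝ)) : ℝ :=
  (resM₁ b c p ^ 2 + resM₂ b c p ^ 2) / (1 + b ^ 2 + c ^ 2)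

/-- `d_N`, the squared distance to `N = ℝ²`. -/
noncomputable def sqDistN (p : (Fin 2 → ℝ) × (Fin 2 → ℝ)) : ℝ := p.2 0 ^ 2 + p.2 1 ^ 2

variable {γ : ℝ → (Fin 2 → ℝ) × (Fin 2 → ℝ)} {γ' : (Fin 2 → ℝ) × (Fin 2 → ℝ)} {t : ℝ}

theorem hasDerivAt_resM₁_comp (hγ : HasDerivAt γ γ' t) :
    HasDerivAt (fun s => resM₁ b c (γ s)) (resM₁ b c γ') t := by
  have hx := hasDerivAt_pi.1 hγ.fst
  have hy := hasDerivAt_pi.1 hγ.snd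
  exact ((hx 0).sub ((hy 0).const_mul c)).add ((hy 1).const_mul b)

theorem hasDerivAt_resM₂_comp (hγ : HasDerivAt γ γ' t) :
    HasDerivAt (fun s => resM₂ b c (γ s)) (resM₂ b c γ') t := by
  have hx := hasDerivAt_pi.1 hγ.fst
  have hy := hasDerivAt_pi.1 hγ.snd
  exact ((hx 1).sub ((hy 1).const_mul c)).sub ((hy 0).const_mul b)

theorem hasDerivAt_sqDistM_comp (hγ : HasDerivAt γ γ' t) :
    HasDerivAt (fun s => sqDistM b c (γ s))
      (2 * (resM₁ b c (γ t) * resM₁ b c γ' + resM₂ b c (γ t) * resM₂ b c γ') /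
        (1 + b ^ 2 + c ^ 2)) t := by
  refine ((((hasDerivAt_resM₁_comp b c hγ).fun_pow 2).fun_add
    ((hasDerivAt_resM₂_comp b c hγ).fun_pow 2)).div_const _).congr_deriv ?_
  norm_num
  ring

theorem hasDerivAt_sqDistN_comp (hγ : HasDerivAt γ γ' t) :
    HasDerivAt (fun s => sqDistN (γ s)) (2 * ((γ t).2 0 * γ'.2 0 + (γ t).2 1 * γ'.2 1)) t := by
  have hy := hasDerivAt_pi.1 hγ.snd
  refine (((hy 0).fun_pow 2).fun_add ((hy 1).fun_pow 2)).congr_deriv ?_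
  norm_num
  ring

variable (p : (Fin 2 → ℝ) × (Fin 2 → ℝ))

theorem pderivY_sqDistM (j : Fin 2) :
    pderivY j (sqDistM b c) p =
      2 * (resM₁ b c p * resM₁ b c (0, Pi.single j 1)
        + resM₂ b c p * resM₂ b c (0, Pi.single j 1)) / (1 + b ^ 2 + c ^ 2) := by
  have h := (hasDerivAt_sqDistM_comp b c (hasDerivAt_prodMk_update p j (p.2 j))).deriv
  simp only [update_eq_self, Prod.mk.eta] at h
  exact h

theorem pderivY_sqDistN (j : Fin 2) : pderivY j sqDistN p = 2 * p.2 j := by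
  have h := (hasDerivAt_sqDistN_comp (hasDerivAt_prodMk_update p j (p.2 j))).deriv
  simp only [update_eq_self] at h
  refine h.trans ?_
  fin_cases j <;> simp

theorem pderivX_sqDistN (j : Fin 2) : pderivX j sqDistN p = 0 := by
  simp [pderivX, sqDistN]

theorem re_sum_dz_sqDistM_mul_dzbar_sqDistN :
    (∑ j : Fin 2, dz j (sqDistM b c) p * dzbar j sqDistN p).re =
      (b * (resM₁ b c p * p.2 1 - resM₂ b c p * p.2 0)
        - c * (resM₁ b c p * p.2 0 + resM₂ b c p * p.2 1)) / (1 + b ^ 2 + c ^ 2) := by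
  rw [Complex.re_sum, Fin.sum_univ_two, re_dz_mul_dzbar, re_dz_mul_dzbar]
  simp only [pderivX_sqDistN, pderivY_sqDistN, pderivY_sqDistM]
  simp only [resM₁, resM₂, Pi.zero_apply, Pi.single_eq_same, ne_eq, one_ne_zero, zero_ne_one,
    not_false_eq_true, Pi.single_eq_of_ne, mul_zero, mul_one, mul_neg, zero_sub, sub_zero, sub_self,
    add_zero, zero_add]
  ring

end SquaredDistances

theorem abs_mul_sub_mul_le_sqrt_mul_sqrt (b c u v y₁ y₂ : ℝ) :
    |b * (u * y₂ - v * y₁) - c * (u * y₁ + v * y₂)| ≤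
      (|b| + |c|) * (√(u ^ 2 + v ^ 2) * √(y₁ ^ 2 + y₂ ^ 2)) := by
  have h₁ := abs_mul_add_mul_le_sqrt_mul_sqrt u (-v) y₂ y₁
  have h₂ := abs_mul_add_mul_le_sqrt_mul_sqrt u v y₁ y₂
  rw [neg_sq, add_comm (y₂ ^ 2), neg_mul, ← sub_eq_add_neg] at h₁
  calc _ ≤ |b| * |u * y₂ - v * y₁| + |c| * |u * y₁ + v * y₂| := by
        rw [← abs_mul, ← abs_mul]
        exact abs_sub _ _
    _ ≤ |b| * (√(u ^ 2 + v ^ 2) * √(y₁ ^ 2 + y₂ ^ 2))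
          + |c| * (√(u ^ 2 + v ^ 2) * √(y₁ ^ 2 + y₂ ^ 2)) := by gcongr
    _ = _ := by ring

/-- Cauchy–Schwarz estimate for `Re(∑ⱼ (∂d_M/∂z_j)(∂d_N/∂z̄_j))` where
`M = (A+iI)ℝ²`, `A = [[c,-b],[b,c]]`, and `N = ℝ²`. -/
theorem re_sum_dz_dzbar_estimate (b c : ℝ) :
    let dM : (Fin 2 → ℝ) × (Fin 2 → ℝ) → ℝ :=
      fun p => ((p.1 0 - c * p.2 0 + b * p.2 1) ^ 2
        + (p.1 1 - c * p.2 1 - b * p.2 0) ^ 2) / (1 + b ^ 2 + c ^ 2)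
    let dN : (Fin 2 → ℝ) × (Fin 2 → ℝ) → ℝ := fun p => (p.2 0) ^ 2 + (p.2 1) ^ 2
    ∀ p : (Fin 2 → ℝ) × (Fin 2 → ℝ),
      |(∑ j : Fin 2, dz j dM p * dzbar j dN p).re| ≤
        ((|b| + |c|) / Real.sqrt (1 + b ^ 2 + c ^ 2)) * Real.sqrt (dM p * dN p) := by
  intro dM dN p
  rw [show dM = sqDistM b c from rfl, show dN = sqDistN from rfl,
    re_sum_dz_sqDistM_mul_dzbar_sqDistN]
  have hD : 0 < 1 + b ^ 2 + c ^ 2 := by positivity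
  calc _ = |b * (resM₁ b c p * p.2 1 - resM₂ b c p * p.2 0)
          - c * (resM₁ b c p * p.2 0 + resM₂ b c p * p.2 1)| / (1 + b ^ 2 + c ^ 2) := by
        rw [abs_div, abs_of_pos hD]
    _ ≤ (|b| + |c|) * (√(resM₁ b c p ^ 2 + resM₂ b c p ^ 2) * √(p.2 0 ^ 2 + p.2 1 ^ 2))
          / (1 + b ^ 2 + c ^ 2) := by
        gcongr
        exact abs_mul_sub_mul_le_sqrt_mul_sqrt _ _ _ _ _ _
    _ = _ := by
        rw [sqDistM, sqDistN, Real.sqrt_mul (by positivity), Real.sqrt_div (by positivity)]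
        field_simp
        rw [Real.sq_sqrt hD.le]
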